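/- arXiv:2408.06917 — 2 statements merged into one kernel-verified Lean document; each statement's English description precedes it below -/
import Mathlib

section
/- Milnor–Moore theorem, essential image (Theorem "Mil"): Let K be a field of characteristic zero, H a Hopf algebra over K, and P a Lie subalgebra of H (for the commutator bracket) whose carrier is exactly the set of primitive elements of H. If H is generated as a K-algebra by its primitive elements (Algebra.adjoin K {a : H | a is primitive} = ⊤), then the K-algebra homomorphism U(P) → H obtained by applying the universal property of the universal enveloping algebra to the inclusion Lie algebra homomorphism P → H is bijective. -/
/-!
Surjectivity holds because the image of `lift` is the subalgebra generated by the primitives.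

For injectivity, let `φ : U(L) → H` lift an injective Lie map `f` with primitive values, and filter
`U(L)` by `Fₙ = (K ⊕ ι L)ⁿ`; we show by induction on `n` that `φ` is injective on `Fₙ`, without
using PBW. The comultiplication of `U(L)` making `ι L` primitive satisfies
`Δ(Fₙ) ⊆ ∑_{i+j=n} Fᵢ ⊗ Fⱼ` and is intertwined by `φ` with that of `H`. Hence for `u ∈ Fₙ₊₁` the
reduced coproduct `Δu - u ⊗ 1 - 1 ⊗ u + ε(u)` lies in `Fₙ ⊗ Fₙ`, on which `φ ⊗ φ` is injective
(we are over a field), so `φ u = 0` forces `u` to be primitive. On the other hand `m ∘ Δ` sends a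
product of `k` generators to a sum of `2ᵏ` reorderings of it, so it acts on `Fₙ₊₁` as `2ⁿ⁺¹`
modulo `Fₙ`, while it doubles primitives; in characteristic zero and for `n ≥ 1` this puts `u`
in `Fₙ`.
-/

open TensorProduct

attribute [local instance 100] LieRing.ofAssociativeRing

section OneSupPow

variable {R A : Type*} [CommRing R] [Ring A] [Algebra R A] (W : Submodule R A)

theorem Submodule.one_sup_pow_succ (n : ℕ) :
    (1 ⊔ W) ^ (n + 1) = (1 ⊔ W) ^ n ⊔ (1 ⊔ W) ^ n * W := by
  rw [pow_succ, mul_sup, mul_one]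

theorem Submodule.one_sup_pow_mono : Monotone ((1 ⊔ W) ^ · : ℕ → Submodule R A) :=
  fun _ _ h => pow_le_pow_right' le_sup_left h

theorem Submodule.one_le_one_sup_pow (n : ℕ) : 1 ≤ (1 ⊔ W) ^ n :=
  one_le_pow_of_one_le' le_sup_left n

theorem Submodule.exists_mem_one_sup_pow_of_mem_adjoin {x : A}
    (hx : x ∈ Algebra.adjoin R (W : Set A)) : ∃ n, x ∈ (1 ⊔ W) ^ n := by
  induction hx using Algebra.adjoin_induction with
  | mem x hx => exact ⟨1, by rw [pow_one]; exact Submodule.mem_sup_right hx⟩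
  | algebraMap r => exact ⟨0, by rw [pow_zero]; exact Submodule.algebraMap_mem r⟩
  | add x y _ _ hx hy =>
    obtain ⟨m, hm⟩ := hx
    obtain ⟨n, hn⟩ := hy
    exact ⟨max m n, add_mem (one_sup_pow_mono W (le_max_left m n) hm)
      (one_sup_pow_mono W (le_max_right m n) hn)⟩
  | mul x y _ _ hx hy =>
    obtain ⟨m, hm⟩ := hx
    obtain ⟨n, hn⟩ := hy
    exact ⟨m + n, pow_add (1 ⊔ W) m n ▸ Submodule.mul_mem_mul hm hn⟩

theorem Submodule.lie_mem_one_sup_pow {w : A} (hw : ∀ v ∈ W, ⁅w, v⁆ ∈ W) {n : ℕ} {y : A}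
    (hy : y ∈ (1 ⊔ W) ^ n) : ⁅w, y⁆ ∈ (1 ⊔ W) ^ n := by
  suffices h : (1 ⊔ W) ^ n ≤ ((1 ⊔ W) ^ n).comap (LieAlgebra.ad R A w) from h hy
  clear hy
  induction n with
  | zero =>
    rintro _ ⟨r, rfl⟩
    simp [Ring.lie_def]
  | succ n ih =>
    rw [one_sup_pow_succ]
    refine sup_le (ih.trans (Submodule.comap_mono le_sup_left)) (Submodule.mul_le.mpr ?_)
    intro y hy v hv
    have hlie : ⁅w, y * v⁆ = ⁅w, y⁆ * v + y * ⁅w, v⁆ := by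
      simp only [Ring.lie_def]; noncomm_ring
    simp only [Submodule.mem_comap, LieAlgebra.ad_apply, hlie]
    exact Submodule.mem_sup_right (add_mem (Submodule.mul_mem_mul (ih hy) hv)
      (Submodule.mul_mem_mul hy (hw v hv)))

end OneSupPow

section TensorSubmodule

variable {R A B : Type*} [CommRing R] [Ring A] [Algebra R A] [Ring B] [Algebra R B]

theorem Submodule.map₂_mk_mul_map₂_mk_le (M M' : Submodule R A) (N N' : Submodule R B) :
    map₂ (TensorProduct.mk R A B) M N * map₂ (TensorProduct.mk R A B) M' N' ≤
      map₂ (TensorProduct.mk R A B) (M * M') (N * N') := by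
  rw [map₂_eq_span_image2, map₂_eq_span_image2, span_mul_span, span_le]
  rintro _ ⟨_, ⟨a, ha, b, hb, rfl⟩, _, ⟨a', ha', b', hb', rfl⟩, rfl⟩
  simp only [mk_apply, Algebra.TensorProduct.tmul_mul_tmul]
  exact apply_mem_map₂ _ (mul_mem_mul ha ha') (mul_mem_mul hb hb')

theorem Submodule.disjoint_map₂_mk_ker_map {K V V' W W' : Type*} [Field K]
    [AddCommGroup V] [Module K V] [AddCommGroup V'] [Module K V']
    [AddCommGroup W] [Module K W] [AddCommGroup W'] [Module K W']
    {p : Submodule K V} {q : Submodule K W} {f : V →ₗ[K] V'} {g : W →ₗ[K] W'}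
    (hf : Disjoint p (LinearMap.ker f)) (hg : Disjoint q (LinearMap.ker g)) :
    Disjoint (map₂ (TensorProduct.mk K V W) p q) (LinearMap.ker (TensorProduct.map f g)) := by
  rw [← LinearMap.injective_domRestrict_iff] at hf hg
  rw [← TensorProduct.range_mapIncl, LinearMap.disjoint_ker]
  rintro _ ⟨t, rfl⟩ ht
  rw [← LinearMap.comp_apply, ← TensorProduct.map_comp] at ht
  rw [map_injective_of_flat_flat _ _ hf hg (ht.trans (map_zero _).symm), map_zero]

theorem LinearMap.mul'_mul_one_tmul
    (z : A ⊗[R] A) (a : A) : mul' R A (z * (1 ⊗ₜ a)) = mul' R A z * a := by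
  induction z with
  | zero => simp
  | tmul b c => simp [mul_assoc]
  | add y z hy hz => rw [add_mul, map_add, hy, hz, map_add, add_mul]

end TensorSubmodule

def IsPrimitiveElem (R : Type*) {A : Type*} [CommSemiring R] [Semiring A] [Bialgebra R A]
    (a : A) : Prop :=
  Coalgebra.comul (R := R) a = a ⊗ₜ 1 + 1 ⊗ₜ a

theorem IsPrimitiveElem.counit_eq_zero {R A : Type*} [CommRing R] [Ring A] [Bialgebra R A]
    {a : A} (ha : IsPrimitiveElem R a) : Coalgebra.counit (R := R) a = 0 := by
  have h := Coalgebra.rTensor_counit_comul (R := R) a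
  rw [ha, map_add, LinearMap.rTensor_tmul, LinearMap.rTensor_tmul, Bialgebra.counit_one,
    add_eq_right] at h
  simpa using congr(Coalgebra.counit (R := R) (TensorProduct.lid R A $h))

namespace UniversalEnvelopingAlgebra

section CommRing

variable (R : Type*) [CommRing R] (L : Type*) [LieRing L] [LieAlgebra R L]

local notation "𝓤" => UniversalEnvelopingAlgebra R L

noncomputable def comul : 𝓤 →ₐ[R] 𝓤 ⊗[R] 𝓤 :=
  lift R
    { toLinearMap := (TensorProduct.mk R 𝓤 𝓤).flip 1 ∘ₗ (ι R : L →ₗ⁅R⁆ 𝓤) +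
        TensorProduct.mk R 𝓤 𝓤 1 ∘ₗ (ι R : L →ₗ⁅R⁆ 𝓤)
      map_lie' {x y} := by
        simp only [AddHom.toFun_eq_coe, LinearMap.coe_toAddHom, LinearMap.add_apply,
          LinearMap.comp_apply, LinearMap.flip_apply, mk_apply, LieHom.coe_toLinearMap,
          LieHom.map_lie, Ring.lie_def, add_mul, mul_add, sub_tmul, tmul_sub,
          Algebra.TensorProduct.tmul_mul_tmul, one_mul, mul_one]
        abel }

noncomputable def counit : 𝓤 →ₐ[R] R := lift R 0

variable {R L}

@[simp]
theorem comul_ι (x : L) : comul R L (ι R x) = ι R x ⊗ₜ 1 + 1 ⊗ₜ ι R x :=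
  lift_ι_apply R _ x

@[simp]
theorem counit_ι (x : L) : counit R L (ι R x) = 0 :=
  lift_ι_apply R _ x

variable (R L)

noncomputable def filtration (n : ℕ) : Submodule R 𝓤 :=
  (1 ⊔ LinearMap.range (ι R : L →ₗ⁅R⁆ 𝓤).toLinearMap) ^ n

noncomputable def tensorFiltration (n : ℕ) : Submodule R (𝓤 ⊗[R] 𝓤) :=
  ⨆ (i) (j) (_ : i + j = n),
    Submodule.map₂ (TensorProduct.mk R 𝓤 𝓤) (filtration R L i) (filtration R L j)

variable {R L}

theorem filtration_mono : Monotone (filtration R L) :=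
  Submodule.one_sup_pow_mono _

theorem filtration_mul_le (m n : ℕ) :
    filtration R L m * filtration R L n ≤ filtration R L (m + n) :=
  (pow_add _ m n).ge

theorem algebraMap_mem_filtration (r : R) (n : ℕ) : algebraMap R 𝓤 r ∈ filtration R L n :=
  Submodule.one_le_one_sup_pow _ n (Submodule.algebraMap_mem r)

theorem one_mem_filtration (n : ℕ) : (1 : 𝓤) ∈ filtration R L n :=
  Submodule.one_le.mp (Submodule.one_le_one_sup_pow _ n)

theorem ι_mem_filtration_one (x : L) : ι R x ∈ filtration R L 1 := by
  rw [filtration, pow_one]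
  exact Submodule.mem_sup_right ⟨x, rfl⟩

theorem adjoin_range_ι : Algebra.adjoin R (Set.range (ι R : L → 𝓤)) = ⊤ := by
  have h : Set.range (ι R : L → 𝓤) = mkAlgHom R L '' Set.range (TensorAlgebra.ι R) :=
    Set.range_comp (mkAlgHom R L) (TensorAlgebra.ι R)
  rw [h, Algebra.adjoin_image, TensorAlgebra.adjoin_range_ι, Algebra.map_top,
    AlgHom.range_eq_top]
  exact RingCon.mkₐ_surjective _

theorem exists_mem_filtration (u : 𝓤) : ∃ n, u ∈ filtration R L n :=
  Submodule.exists_mem_one_sup_pow_of_mem_adjoin _ (by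
    rw [LinearMap.coe_range, LieHom.coe_toLinearMap, adjoin_range_ι]; trivial)

theorem map₂_le_tensorFiltration {i j n : ℕ} (h : i + j = n) :
    Submodule.map₂ (TensorProduct.mk R 𝓤 𝓤) (filtration R L i) (filtration R L j) ≤
      tensorFiltration R L n :=
  le_iSup_of_le i (le_iSup_of_le j (le_iSup_of_le h le_rfl))

theorem tmul_mem_tensorFiltration {i j n : ℕ} (h : i + j = n) {a b : 𝓤}
    (ha : a ∈ filtration R L i) (hb : b ∈ filtration R L j) : a ⊗ₜ b ∈ tensorFiltration R L n :=
  map₂_le_tensorFiltration h (Submodule.apply_mem_map₂ _ ha hb)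

theorem one_le_tensorFiltration (n : ℕ) : 1 ≤ tensorFiltration R L n := by
  rw [Submodule.one_eq_span, Submodule.span_le, Set.singleton_subset_iff]
  exact tmul_mem_tensorFiltration (zero_add n) (one_mem_filtration 0) (one_mem_filtration n)

theorem tensorFiltration_mul_le (m n : ℕ) :
    tensorFiltration R L m * tensorFiltration R L n ≤ tensorFiltration R L (m + n) := by
  simp only [tensorFiltration, Submodule.iSup_mul, Submodule.mul_iSup, iSup_le_iff]
  intro k l hkl i j hij
  exact (Submodule.map₂_mk_mul_map₂_mk_le _ _ _ _).trans
    ((Submodule.map₂_le_map₂ (filtration_mul_le i k) (filtration_mul_le j l)).trans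
      (map₂_le_tensorFiltration (show i + k + (j + l) = m + n by omega)))

theorem map_comul_filtration_le (n : ℕ) :
    (filtration R L n).map (comul R L).toLinearMap ≤ tensorFiltration R L n := by
  have h_one : (1 ⊔ LinearMap.range (ι R : L →ₗ⁅R⁆ 𝓤).toLinearMap).map (comul R L).toLinearMap ≤
      tensorFiltration R L 1 := by
    rw [Submodule.map_sup, Submodule.map_one]
    refine sup_le (one_le_tensorFiltration 1) ?_
    rintro _ ⟨_, ⟨x, rfl⟩, rfl⟩
    simp only [AlgHom.toLinearMap_apply, LieHom.coe_toLinearMap, comul_ι]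
    exact add_mem
      (tmul_mem_tensorFiltration (add_zero 1) (ι_mem_filtration_one x) (one_mem_filtration 0))
      (tmul_mem_tensorFiltration (zero_add 1) (one_mem_filtration 0) (ι_mem_filtration_one x))
  induction n with
  | zero =>
    rw [filtration, pow_zero, Submodule.map_one]
    exact one_le_tensorFiltration 0
  | succ n ih =>
    rw [filtration, pow_succ, Submodule.map_mul]
    exact (mul_le_mul' ih h_one).trans (tensorFiltration_mul_le n 1)

theorem lie_ι_mem_filtration (x : L) {n : ℕ} {u : 𝓤} (hu : u ∈ filtration R L n) :
    ⁅ι R x, u⁆ ∈ filtration R L n :=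
  Submodule.lie_mem_one_sup_pow _ (by rintro _ ⟨y, rfl⟩; exact ⟨⁅x, y⁆, (ι R).map_lie x y⟩) hu

theorem mul'_mul_ι_tmul_one_sub_mem (x : L) {n : ℕ} {z : 𝓤 ⊗[R] 𝓤}
    (hz : z ∈ tensorFiltration R L n) :
    LinearMap.mul' R 𝓤 (z * (ι R x ⊗ₜ 1)) - LinearMap.mul' R 𝓤 z * ι R x ∈ filtration R L n := by
  let D : 𝓤 ⊗[R] 𝓤 →ₗ[R] 𝓤 := LinearMap.mul' R 𝓤 ∘ₗ LinearMap.mulRight R (ι R x ⊗ₜ 1) -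
    LinearMap.mulRight R (ι R x) ∘ₗ LinearMap.mul' R 𝓤
  suffices h : tensorFiltration R L n ≤ (filtration R L n).comap D from h hz
  refine iSup₂_le fun i j => iSup_le fun hij => Submodule.map₂_le.mpr fun a ha b hb => ?_
  have hD : D (a ⊗ₜ b) = a * ⁅ι R x, b⁆ := by
    simp only [D, LinearMap.sub_apply, LinearMap.comp_apply, LinearMap.mulRight_apply,
      Algebra.TensorProduct.tmul_mul_tmul, mul_one, LinearMap.mul'_apply, Ring.lie_def]
    noncomm_ring
  rw [Submodule.mem_comap, mk_apply, hD, ← hij]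
  exact filtration_mul_le i j (Submodule.mul_mem_mul ha (lie_ι_mem_filtration x hb))

theorem mul'_comul_sub_two_smul_mem {u : 𝓤} (hu : u ∈ filtration R L 1) :
    LinearMap.mul' R 𝓤 (comul R L u) - (2 : R) • u ∈ filtration R L 0 := by
  rw [filtration, pow_one, Submodule.one_eq_range] at hu
  obtain ⟨_, ⟨r, rfl⟩, _, ⟨x, rfl⟩, rfl⟩ := Submodule.mem_sup.mp hu
  have h : LinearMap.mul' R 𝓤 (comul R L (algebraMap R 𝓤 r + ι R x)) -
      (2 : R) • (algebraMap R 𝓤 r + ι R x) = -algebraMap R 𝓤 r := by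
    rw [map_add, comul_ι, AlgHom.commutes, Algebra.TensorProduct.algebraMap_apply, map_add,
      map_add, LinearMap.mul'_apply, LinearMap.mul'_apply, LinearMap.mul'_apply, mul_one,
      mul_one, one_mul, two_smul]
    abel
  rw [Algebra.linearMap_apply, LieHom.coe_toLinearMap, h]
  exact neg_mem (algebraMap_mem_filtration r 0)

theorem mul'_comul_mul_ι_sub_mem {n : ℕ} {u : 𝓤} (hu : u ∈ filtration R L (n + 1))
    (hTu : LinearMap.mul' R 𝓤 (comul R L u) - (2 : R) ^ (n + 1) • u ∈ filtration R L n) (x : L) :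
    LinearMap.mul' R 𝓤 (comul R L (u * ι R x)) - (2 : R) ^ (n + 2) • (u * ι R x) ∈
      filtration R L (n + 1) := by
  -- Moving `ι x` past the right tensor factors of `Δ u` costs commutators with `ι x`.
  have h : LinearMap.mul' R 𝓤 (comul R L (u * ι R x)) - (2 : R) ^ (n + 2) • (u * ι R x) =
      (LinearMap.mul' R 𝓤 (comul R L u * (ι R x ⊗ₜ 1)) -
        LinearMap.mul' R 𝓤 (comul R L u) * ι R x) +
      (2 : R) • ((LinearMap.mul' R 𝓤 (comul R L u) - (2 : R) ^ (n + 1) • u) * ι R x) := by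
    rw [map_mul, comul_ι, mul_add, map_add, LinearMap.mul'_mul_one_tmul, sub_mul,
      smul_sub, smul_mul_assoc, smul_smul, ← pow_succ', two_smul]
    abel
  rw [h]
  refine add_mem (mul'_mul_ι_tmul_one_sub_mem x (map_comul_filtration_le _ ⟨u, hu, rfl⟩))
    (Submodule.smul_mem _ _ ?_)
  rw [filtration, Submodule.one_sup_pow_succ]
  exact Submodule.mem_sup_right (Submodule.mul_mem_mul hTu ⟨x, rfl⟩)

theorem mul'_comul_sub_two_pow_smul_mem {n : ℕ} {u : 𝓤} (hu : u ∈ filtration R L (n + 1)) :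
    LinearMap.mul' R 𝓤 (comul R L u) - (2 : R) ^ (n + 1) • u ∈ filtration R L n := by
  induction n generalizing u with
  | zero => simpa using mul'_comul_sub_two_smul_mem hu
  | succ n ih =>
    suffices h : filtration R L (n + 2) ≤ (filtration R L (n + 1)).comap
        (LinearMap.mul' R 𝓤 ∘ₗ (comul R L).toLinearMap - (2 : R) ^ (n + 2) • LinearMap.id) from
      h hu
    rw [filtration, Submodule.one_sup_pow_succ, ← filtration]
    refine sup_le (fun u hu => ?_) (Submodule.mul_le.mpr fun u hu w hw => ?_)
    · have h : LinearMap.mul' R 𝓤 (comul R L u) - (2 : R) ^ (n + 2) • u =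
          (LinearMap.mul' R 𝓤 (comul R L u) - (2 : R) ^ (n + 1) • u) -
            ((2 : R) ^ (n + 2) - (2 : R) ^ (n + 1)) • u := by
        rw [sub_smul]; abel
      change LinearMap.mul' R 𝓤 (comul R L u) - (2 : R) ^ (n + 2) • u ∈ filtration R L (n + 1)
      rw [h]
      exact sub_mem (filtration_mono n.le_succ (ih hu)) (Submodule.smul_mem _ _ hu)
    · obtain ⟨x, rfl⟩ := hw
      exact mul'_comul_mul_ι_sub_mem hu (ih hu) x

theorem lTensor_counit_comul (u : 𝓤) :
    ((Algebra.ofId R 𝓤).comp (counit R L)).toLinearMap.lTensor 𝓤 (comul R L u) = u ⊗ₜ 1 := by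
  have h : (Algebra.TensorProduct.map (.id R 𝓤) ((Algebra.ofId R 𝓤).comp (counit R L))).comp
      (comul R L) = Algebra.TensorProduct.includeLeft := by
    ext x
    simp [-ι_apply]
  exact congr($h u)

theorem rTensor_counit_comul (u : 𝓤) :
    ((Algebra.ofId R 𝓤).comp (counit R L)).toLinearMap.rTensor 𝓤 (comul R L u) = 1 ⊗ₜ u := by
  have h : (Algebra.TensorProduct.map ((Algebra.ofId R 𝓤).comp (counit R L)) (.id R 𝓤)).comp
      (comul R L) = Algebra.TensorProduct.includeRight := by
    ext x
    simp [-ι_apply]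
  exact congr($h u)

theorem comul_sub_mem_map₂ {n : ℕ} {u : 𝓤} (hu : u ∈ filtration R L (n + 1)) :
    comul R L u - u ⊗ₜ 1 - 1 ⊗ₜ u + counit R L u • 1 ∈
      Submodule.map₂ (TensorProduct.mk R 𝓤 𝓤) (filtration R L n) (filtration R L n) := by
  let π : 𝓤 →ₗ[R] 𝓤 := LinearMap.id - ((Algebra.ofId R 𝓤).comp (counit R L)).toLinearMap
  have hπ_mem {i : ℕ} {a : 𝓤} (ha : a ∈ filtration R L i) : π a ∈ filtration R L i :=
    sub_mem ha (algebraMap_mem_filtration _ i)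
  have hπ_zero {a : 𝓤} (ha : a ∈ filtration R L 0) : π a = 0 := by
    rw [filtration, pow_zero] at ha
    obtain ⟨r, rfl⟩ := Submodule.mem_one.mp ha
    simp [π]
  have hπ_comul : TensorProduct.map π π (comul R L u) =
      comul R L u - u ⊗ₜ 1 - 1 ⊗ₜ u + counit R L u • 1 := by
    rw [← LinearMap.rTensor_comp_lTensor, LinearMap.comp_apply]
    simp only [π, LinearMap.lTensor_sub, LinearMap.rTensor_sub, LinearMap.sub_apply,
      LinearMap.lTensor_id, LinearMap.rTensor_id, LinearMap.id_apply, lTensor_counit_comul,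
      map_sub, rTensor_counit_comul, LinearMap.rTensor_tmul, AlgHom.toLinearMap_apply,
      AlgHom.comp_apply, Algebra.ofId_apply, Algebra.algebraMap_eq_smul_one, ← smul_tmul',
      Algebra.TensorProduct.one_def]
    abel
  rw [← hπ_comul]
  -- `π` kills `F₀`, so `π ⊗ π` sends `Fᵢ ⊗ Fⱼ` with `i + j = n + 1` into `Fₙ ⊗ Fₙ`.
  refine (show tensorFiltration R L (n + 1) ≤ (Submodule.map₂ (TensorProduct.mk R 𝓤 𝓤)
      (filtration R L n) (filtration R L n)).comap (TensorProduct.map π π) from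
    iSup₂_le fun i j => iSup_le fun hij => Submodule.map₂_le.mpr fun a ha b hb => ?_)
    (map_comul_filtration_le (n + 1) ⟨u, hu, rfl⟩)
  rw [Submodule.mem_comap, mk_apply, TensorProduct.map_tmul]
  rcases Nat.eq_zero_or_pos i with rfl | hi
  · rw [hπ_zero ha, zero_tmul]; exact zero_mem _
  rcases Nat.eq_zero_or_pos j with rfl | hj
  · rw [hπ_zero hb, tmul_zero]; exact zero_mem _
  exact Submodule.apply_mem_map₂ _ (filtration_mono (by omega) (hπ_mem ha))
    (filtration_mono (by omega) (hπ_mem hb))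

variable {H : Type*} [Ring H]

theorem lift_surjective [Algebra R H] {f : L →ₗ⁅R⁆ H}
    (hf : Algebra.adjoin R (Set.range f) = ⊤) : Function.Surjective (lift R f) := by
  rw [← AlgHom.range_eq_top, eq_top_iff, ← hf]
  refine Algebra.adjoin_le ?_
  rintro _ ⟨x, rfl⟩
  exact ⟨ι R x, lift_ι_apply R f x⟩

variable [Bialgebra R H] {f : L →ₗ⁅R⁆ H}

theorem map_lift_comp_comul (hf : ∀ x, IsPrimitiveElem R (f x)) :
    (Algebra.TensorProduct.map (lift R f) (lift R f)).comp (comul R L) =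
      (Bialgebra.comulAlgHom R H).comp (lift R f) := by
  ext x
  simpa [-ι_apply, lift_ι_apply] using (hf x).symm

theorem counit_comp_lift (hf : ∀ x, IsPrimitiveElem R (f x)) :
    (Bialgebra.counitAlgHom R H).comp (lift R f) = counit R L := by
  ext x
  simp [-ι_apply, lift_ι_apply, (hf x).counit_eq_zero]

theorem disjoint_filtration_one_ker_lift (hf_inj : Function.Injective f)
    (hf : ∀ x, IsPrimitiveElem R (f x)) :
    Disjoint (filtration R L 1) (LinearMap.ker (lift R f).toLinearMap) := by
  rw [LinearMap.disjoint_ker]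
  intro u hu hφu
  rw [filtration, pow_one, Submodule.one_eq_range] at hu
  obtain ⟨_, ⟨r, rfl⟩, _, ⟨x, rfl⟩, rfl⟩ := Submodule.mem_sup.mp hu
  simp only [AlgHom.toLinearMap_apply, map_add, LieHom.coe_toLinearMap, Algebra.linearMap_apply,
    AlgHom.commutes, lift_ι_apply] at hφu
  rw [Algebra.linearMap_apply]
  have hr : r = 0 := by
    simpa [(hf x).counit_eq_zero] using
      congr(Coalgebra.counit (R := R) $hφu)
  rw [hr, map_zero, zero_add] at hφu ⊢
  rw [LieHom.coe_toLinearMap, hf_inj (hφu.trans f.map_zero.symm), map_zero]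

end CommRing

section Field

variable {K : Type*} [Field K] [CharZero K] {L : Type*} [LieRing L] [LieAlgebra K L]
  {H : Type*} [Ring H] [Bialgebra K H] {f : L →ₗ⁅K⁆ H}

local notation "𝓤" => UniversalEnvelopingAlgebra K L

theorem disjoint_filtration_succ_ker_lift
    (hf : ∀ x, IsPrimitiveElem K (f x)) {n : ℕ} (hn : 1 ≤ n)
    (ih : Disjoint (filtration K L n) (LinearMap.ker (lift K f).toLinearMap)) :
    Disjoint (filtration K L (n + 1)) (LinearMap.ker (lift K f).toLinearMap) := by
  rw [LinearMap.disjoint_ker]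
  intro u hu hφu
  rw [AlgHom.toLinearMap_apply] at hφu
  have hε : counit K L u = 0 := by
    rw [← counit_comp_lift hf, AlgHom.comp_apply, hφu, map_zero]
  have hreduced : comul K L u - u ⊗ₜ 1 - 1 ⊗ₜ u = 0 := by
    have h := comul_sub_mem_map₂ hu
    rw [hε, zero_smul, add_zero] at h
    refine LinearMap.disjoint_ker.mp (Submodule.disjoint_map₂_mk_ker_map ih ih) _ h ?_
    have hcomul := congr($(map_lift_comp_comul hf) u)
    simp only [AlgHom.comp_apply, hφu, map_zero] at hcomul
    simp only [map_sub, AlgHom.toLinearMap_apply, TensorProduct.map_tmul, hφu, map_one,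
      zero_tmul, tmul_zero, sub_zero]
    exact hcomul
  have hmul' : LinearMap.mul' K 𝓤 (comul K L u) = (2 : K) • u := by
    rw [sub_sub, sub_eq_zero] at hreduced
    rw [hreduced, map_add, LinearMap.mul'_apply, LinearMap.mul'_apply, mul_one, one_mul, two_smul]
  have h2 : (2 : K) - 2 ^ (n + 1) ≠ 0 := by
    have h : 2 ^ 1 < 2 ^ (n + 1) := Nat.pow_lt_pow_right one_lt_two (by omega)
    rw [sub_ne_zero]
    exact_mod_cast h.ne
  have hu' := mul'_comul_sub_two_pow_smul_mem hu
  rw [hmul', ← sub_smul, Submodule.smul_mem_iff _ h2] at hu'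
  exact LinearMap.disjoint_ker.mp ih u hu' hφu

theorem disjoint_filtration_ker_lift (hf_inj : Function.Injective f)
    (hf : ∀ x, IsPrimitiveElem K (f x)) (n : ℕ) :
    Disjoint (filtration K L n) (LinearMap.ker (lift K f).toLinearMap) := by
  have h (m : ℕ) (hm : 1 ≤ m) :
      Disjoint (filtration K L m) (LinearMap.ker (lift K f).toLinearMap) := by
    induction m, hm using Nat.le_induction with
    | base => exact disjoint_filtration_one_ker_lift hf_inj hf
    | succ m hm ih => exact disjoint_filtration_succ_ker_lift hf hm ih
  exact (h (n + 1) n.succ_pos).mono_left (filtration_mono n.le_succ)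

theorem lift_injective (hf_inj : Function.Injective f)
    (hf : ∀ x, IsPrimitiveElem K (f x)) :
    Function.Injective (lift K f) := by
  refine (injective_iff_map_eq_zero _).mpr fun u hu => ?_
  obtain ⟨n, hn⟩ := exists_mem_filtration u
  exact LinearMap.disjoint_ker.mp (disjoint_filtration_ker_lift hf_inj hf n) u hn hu

end Field

end UniversalEnvelopingAlgebra

/-- **Milnor–Moore theorem, essential image.**
Let `K` be a field of characteristic zero, `H` a Hopf algebra over `K`, and `P` a Lie
subalgebra of `H` (for the commutator bracket) whose carrier is exactly the set of
primitive elements of `H`.  If `H` is generated as a `K`-algebra by its primitive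
elements, then the `K`-algebra homomorphism `U(P) → H` obtained by applying the
universal property of the universal enveloping algebra to the inclusion Lie algebra
homomorphism `P → H` is bijective. -/
theorem milnor_moore_essential_image
    (K : Type*) [Field K] [CharZero K]
    (H : Type*) [Ring H] [HopfAlgebra K H]
    (P : LieSubalgebra K H)
    (hP : (P : Set H) =
      {a : H | Coalgebra.comul (R := K) a = a ⊗ₜ[K] 1 + 1 ⊗ₜ[K] a})
    (hgen : Algebra.adjoin K
      {a : H | Coalgebra.comul (R := K) a = a ⊗ₜ[K] 1 + 1 ⊗ₜ[K] a} = ⊤) :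
    Function.Bijective (UniversalEnvelopingAlgebra.lift K P.incl) := by
  have hrange : Set.range P.incl = {a : H | IsPrimitiveElem K a} :=
    Subtype.range_coe_subtype.trans hP
  have hprim (x : P) : IsPrimitiveElem K (P.incl x) := hrange.subset ⟨x, rfl⟩
  exact ⟨UniversalEnvelopingAlgebra.lift_injective Subtype.val_injective hprim,
    UniversalEnvelopingAlgebra.lift_surjective (hrange ▸ hgen)⟩
end

section
/- Recognition of cocartesian monoidal structures via a monadic symmetric monoidal functor (Lemma "nnlklj" of the paper, stated for ordinary categories): Let C be a symmetric monoidal category that admits finite coproducts, let D be a symmetric monoidal category, and let G : D ⥤ C be a functor that is symmetric monoidal and monadic, with left adjoint F : C ⥤ D. Assume the tensor unit 𝟙_D of D is an initial object, and assume that for all objects X, Y of C the canonical morphisms F X ≅ F X ⊗ 𝟙_D → F X ⊗ F Y and F Y ≅ 𝟙_D ⊗ F Y → F X ⊗ F Y (given by the inverse unitors followed by tensoring with the unique morphisms out of the initial tensor unit) exhibit F X ⊗ F Y as a binary coproduct of F X and F Y. Then for all objects A, B of D, the analogous canonical morphisms A → A ⊗ B and B → A ⊗ B exhibit A ⊗ B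 as a binary coproduct of A and B; i.e., the monoidal structure on D is cocartesian. -/
/-!
Write `B : D` as the coequalizer `F G F G B ⇉ F G B → B` of the counit. Its image under `G` is a
split coequalizer, and since `G` is monoidal so is the image of its whiskering by `A ◁ -`;
a monadic functor reflects coequalizers with split image, so `A ◁ -` preserves this
coequalizer. Since a coproduct with `A` commutes with coequalizers, `A ⊗ B` is a coproduct for
all `B` as soon as `A ⊗ F Y` is one for all `Y`. Applying this first with `A = F X` and then,
after braiding, with arbitrary `A` gives the theorem.
-/

open CategoryTheory MonoidalCategory Limits

namespace CategoryTheory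

variable {C : Type*} [Category C] {D : Type*} [Category D]

noncomputable def Monad.isColimitOfIsSplitCoequalizerMap (G : D ⥤ C) [MonadicRightAdjoint G]
    {X Y Z : D} {f g : X ⟶ Y} {π : Y ⟶ Z} (w : f ≫ π = g ≫ π)
    (s : IsSplitCoequalizer (G.map f) (G.map g) (G.map π)) :
    IsColimit (Cofork.ofπ π w) :=
  let T := monadicLeftAdjoint G ⋙ G
  -- split coequalizers are absolute, so the monad `T` preserves them
  have preserves (K : WalkingParallelPair ⥤ C)
      (_ : HasSplitCoequalizer (K.map WalkingParallelPairHom.left) (K.map .right)) :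
      PreservesColimit K T :=
    preservesColimit_of_iso_diagram _ (diagramIsoParallelPair K).symm
  have := preserves (parallelPair f g ⋙ G) ⟨⟨_, _, ⟨s⟩⟩⟩
  have := preserves ((parallelPair f g ⋙ G) ⋙ T) ⟨⟨_, _, ⟨s.map T⟩⟩⟩
  have : CreatesColimit (parallelPair f g) G := monadicCreatesColimitOfPreservesColimit G _
  isColimitOfIsColimitCoforkMap G w s.isCoequalizer

def IsSplitCoequalizer.conj {X Y Z X' Y' Z' : C} {f g : X ⟶ Y} {π : Y ⟶ Z}
    (t : IsSplitCoequalizer f g π) (eX : X' ≅ X) (eY : Y' ≅ Y) (eZ : Z' ≅ Z) :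
    IsSplitCoequalizer (eX.hom ≫ f ≫ eY.inv) (eX.hom ≫ g ≫ eY.inv)
      (eY.hom ≫ π ≫ eZ.inv) where
  rightSection := eZ.hom ≫ t.rightSection ≫ eY.inv
  leftSection := eY.hom ≫ t.leftSection ≫ eX.inv
  condition := by simp [t.condition_assoc]
  rightSection_π := by simp
  leftSection_bottom := by simp
  leftSection_top := by simp

open Functor.Monoidal in
def Functor.Monoidal.isSplitCoequalizerMapWhiskerLeft [MonoidalCategory C] [MonoidalCategory D]
    (G : D ⥤ C) [G.Monoidal] (A : D) {X Y Z : D} {f g : X ⟶ Y} {π : Y ⟶ Z}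
    (s : IsSplitCoequalizer (G.map f) (G.map g) (G.map π)) :
    IsSplitCoequalizer (G.map (A ◁ f)) (G.map (A ◁ g)) (G.map (A ◁ π)) := by
  rw [map_whiskerLeft, map_whiskerLeft, map_whiskerLeft]
  exact (s.map (tensorLeft (G.obj A))).conj (μIso G A X).symm (μIso G A Y).symm (μIso G A Z).symm

end CategoryTheory

namespace CategoryTheory.MonoidalCategory

section InitialUnit

variable {D : Type*} [Category D] [MonoidalCategory D] (hI : IsInitial (𝟙_ D))

def tensorInl (A B : D) : A ⟶ A ⊗ B := (ρ_ A).inv ≫ (A ◁ hI.to B)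

def tensorInr (A B : D) : B ⟶ A ⊗ B := (λ_ B).inv ≫ (hI.to A ▷ B)

abbrev tensorCofan (A B : D) : BinaryCofan A B :=
  BinaryCofan.mk (tensorInl hI A B) (tensorInr hI A B)

lemma tensorInl_whiskerLeft (A : D) {X Y : D} (u : X ⟶ Y) :
    tensorInl hI A X ≫ (A ◁ u) = tensorInl hI A Y := by
  rw [tensorInl, tensorInl, Category.assoc, ← whiskerLeft_comp, hI.hom_ext (hI.to X ≫ u)]

lemma tensorInr_whiskerLeft (A : D) {X Y : D} (u : X ⟶ Y) :
    tensorInr hI A X ≫ (A ◁ u) = u ≫ tensorInr hI A Y := by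
  rw [tensorInr, tensorInr, Category.assoc, ← whisker_exchange, leftUnitor_inv_naturality_assoc]

variable {hI} in
lemma tensorCofan_hom_ext {A B T : D} (h : IsColimit (tensorCofan hI A B)) {u v : A ⊗ B ⟶ T}
    (hl : tensorInl hI A B ≫ u = tensorInl hI A B ≫ v)
    (hr : tensorInr hI A B ≫ u = tensorInr hI A B ≫ v) : u = v :=
  BinaryCofan.IsColimit.hom_ext h hl hr

noncomputable def isColimitTensorCofanOfCoequalizer {A X₁ X₀ X : D} {f g : X₁ ⟶ X₀}
    {π : X₀ ⟶ X} [Epi π] (w : f ≫ π = g ≫ π)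
    (hπ : IsColimit (Cofork.ofπ (f := A ◁ f) (g := A ◁ g) (A ◁ π)
      (by simp only [← whiskerLeft_comp, w])))
    (h₁ : IsColimit (tensorCofan hI A X₁)) (h₀ : IsColimit (tensorCofan hI A X₀)) :
    IsColimit (tensorCofan hI A X) := by
  let d {T : D} (a : A ⟶ T) (b : X ⟶ T) : A ⊗ X₀ ⟶ T :=
    h₀.desc (BinaryCofan.mk a (π ≫ b))
  have inl_d {T : D} (a : A ⟶ T) (b : X ⟶ T) : tensorInl hI A X₀ ≫ d a b = a :=
    h₀.fac _ ⟨.left⟩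
  have inr_d {T : D} (a : A ⟶ T) (b : X ⟶ T) : tensorInr hI A X₀ ≫ d a b = π ≫ b :=
    h₀.fac _ ⟨.right⟩
  have d_coequalizes {T : D} (a : A ⟶ T) (b : X ⟶ T) :
      (A ◁ f) ≫ d a b = (A ◁ g) ≫ d a b := by
    apply tensorCofan_hom_ext h₁
    · simp only [reassoc_of% tensorInl_whiskerLeft]
    · simp only [reassoc_of% tensorInr_whiskerLeft, inr_d, reassoc_of% w]
  let e {T : D} (a : A ⟶ T) (b : X ⟶ T) : A ⊗ X ⟶ T :=
    Cofork.IsColimit.desc hπ (d a b) (d_coequalizes a b)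
  have π_e {T : D} (a : A ⟶ T) (b : X ⟶ T) : (A ◁ π) ≫ e a b = d a b :=
    Cofork.IsColimit.π_desc' hπ _ _
  have inl_e {T : D} (a : A ⟶ T) (b : X ⟶ T) : tensorInl hI A X ≫ e a b = a := by
    rw [← tensorInl_whiskerLeft hI A π, Category.assoc, π_e, inl_d]
  have inr_e {T : D} (a : A ⟶ T) (b : X ⟶ T) : tensorInr hI A X ≫ e a b = b := by
    rw [← cancel_epi π, ← reassoc_of% tensorInr_whiskerLeft, π_e, inr_d]
  have e_unique {T : D} (a : A ⟶ T) (b : X ⟶ T) (m : A ⊗ X ⟶ T)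
      (hl : tensorInl hI A X ≫ m = a) (hr : tensorInr hI A X ≫ m = b) : m = e a b := by
    have π_m : (A ◁ π) ≫ m = d a b := by
      apply tensorCofan_hom_ext h₀
      · rw [reassoc_of% tensorInl_whiskerLeft, hl, inl_d]
      · rw [reassoc_of% tensorInr_whiskerLeft, hr, inr_d]
    exact Cofork.IsColimit.hom_ext hπ (π_m.trans (π_e a b).symm)
  exact BinaryCofan.IsColimit.mk _ e inl_e inr_e e_unique

lemma tensorInl_braiding [BraidedCategory D] (A B : D) :
    tensorInl hI A B ≫ (β_ A B).hom = tensorInr hI B A := by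
  simp [tensorInl, tensorInr]

lemma tensorInr_braiding [BraidedCategory D] (A B : D) :
    tensorInr hI A B ≫ (β_ A B).hom = tensorInl hI B A := by
  simp [tensorInl, tensorInr]

noncomputable def isColimitTensorCofanSwap [BraidedCategory D] {A B : D}
    (h : IsColimit (tensorCofan hI A B)) : IsColimit (tensorCofan hI B A) :=
  (BinaryCofan.isColimitFlip h).ofIsoColimit <| Cocone.ext (β_ A B) <| by
    rintro ⟨⟨⟩⟩
    exacts [tensorInr_braiding hI A B, tensorInl_braiding hI A B]

noncomputable def isColimitTensorCofanOfFree {C : Type*} [Category C] [MonoidalCategory C]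
    {G : D ⥤ C} [G.Monoidal] [MonadicRightAdjoint G] {F : C ⥤ D} (adj : F ⊣ G) {A : D}
    (hA : ∀ Y : C, IsColimit (tensorCofan hI A (F.obj Y))) (B : D) :
    IsColimit (tensorCofan hI A B) :=
  let s := Monad.beckSplitCoequalizer ((Monad.comparison adj).obj B)
  have w : F.map (G.map (adj.counit.app B)) ≫ adj.counit.app B =
      adj.counit.app (F.obj (G.obj B)) ≫ adj.counit.app B :=
    adj.counit.naturality _
  have : Epi (adj.counit.app B) :=
    epi_of_isColimit_cofork (Monad.isColimitOfIsSplitCoequalizerMap G w s)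
  isColimitTensorCofanOfCoequalizer hI w
    (Monad.isColimitOfIsSplitCoequalizerMap G _
      (Functor.Monoidal.isSplitCoequalizerMapWhiskerLeft G A s))
    (hA _) (hA _)

end InitialUnit

end CategoryTheory.MonoidalCategory

theorem cocartesian_of_monadic_symmetric_monoidal_general
    {C : Type*} [Category C] [MonoidalCategory C] [SymmetricCategory C]
    {D : Type*} [Category D] [MonoidalCategory D] [SymmetricCategory D]
    (G : D ⥤ C) [G.Braided] [MonadicRightAdjoint G]
    (F : C ⥤ D) (adj : F ⊣ G)
    (hI : IsInitial (𝟙_ D))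
    (h : ∀ X Y : C,
      Nonempty (IsColimit (BinaryCofan.mk
        ((ρ_ (F.obj X)).inv ≫ (F.obj X ◁ hI.to (F.obj Y)))
        ((λ_ (F.obj Y)).inv ≫ (hI.to (F.obj X) ▷ F.obj Y)))))
    (A B : D) :
    Nonempty (IsColimit (BinaryCofan.mk
      ((ρ_ A).inv ≫ (A ◁ hI.to B))
      ((λ_ B).inv ≫ (hI.to A ▷ B)))) := by
  have free_left (X : C) (B : D) : IsColimit (tensorCofan hI (F.obj X) B) :=
    isColimitTensorCofanOfFree hI adj (fun Y => (h X Y).some) B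
  have free_right (Y : C) : IsColimit (tensorCofan hI A (F.obj Y)) :=
    isColimitTensorCofanSwap hI (free_left Y A)
  exact ⟨isColimitTensorCofanOfFree hI adj free_right B⟩

/-- **Recognition of cocartesian monoidal structures via a monadic symmetric monoidal
functor** (Lemma `nnlklj` of the paper, for ordinary categories).
Let `C` be a symmetric monoidal category admitting finite coproducts, `D` a symmetric
monoidal category, and `G : D ⥤ C` a symmetric monoidal and monadic functor with left
adjoint `F : C ⥤ D`.  Assume the tensor unit of `D` is initial, and that for all
objects `X`, `Y` of `C` the canonical morphisms `F X → F X ⊗ F Y` and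
`F Y → F X ⊗ F Y` exhibit `F X ⊗ F Y` as a binary coproduct of `F X` and `F Y`.
Then for all objects `A`, `B` of `D` the analogous canonical morphisms exhibit
`A ⊗ B` as a binary coproduct of `A` and `B`; i.e. the monoidal structure on `D` is
cocartesian. -/
theorem cocartesian_of_monadic_symmetric_monoidal
    {C : Type*} [Category C] [MonoidalCategory C] [SymmetricCategory C]
    {D : Type*} [Category D] [MonoidalCategory D] [SymmetricCategory D]
    [HasFiniteCoproducts C]
    (G : D ⥤ C) [G.Braided] [MonadicRightAdjoint G]
    (F : C ⥤ D) (adj : F ⊣ G)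
    (hI : IsInitial (𝟙_ D))
    (h : ∀ X Y : C,
      Nonempty (IsColimit (BinaryCofan.mk
        ((ρ_ (F.obj X)).inv ≫ (F.obj X ◁ hI.to (F.obj Y)))
        ((λ_ (F.obj Y)).inv ≫ (hI.to (F.obj X) ▷ F.obj Y)))))
    (A B : D) :
    Nonempty (IsColimit (BinaryCofan.mk
      ((ρ_ A).inv ≫ (A ◁ hI.to B))
      ((λ_ B).inv ≫ (hI.to A ▷ B)))) :=
  cocartesian_of_monadic_symmetric_monoidal_general G F adj hI h A B
end
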